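/- arXiv:1708.09167 — 3 statements merged into one kernel-verified Lean document; each statement's English description precedes it below -/
import Mathlib

section
/- Let P and σ be a minimally balanced pair of binary strings of length k > 1. Then the first bit of P differs from the last bit of P, the last bit of P equals the first bit of σ, and the first bit of P equals the last bit of σ. -/
lemma cnt_step (L : List Bool) (j : ℕ) (hj : j < L.length) :
    ((L.take (j+1)).count false : ℤ)
      = ((L.take j).count false : ℤ) + (if L[j]! = false then 1 else 0) := by
  have h : L[j]! = L[j] := getElem!_pos L j hj
  rw [List.take_succ, List.getElem?_eq_getElem hj]
  rw [List.count_append]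
  cases hb : L[j] <;> simp [h, hb]

/-- If `P` and `σ` are a minimally balanced pair of binary strings
(lists of Booleans) of length `k > 1`, then the first bit of `P` differs from the
last bit of `P`, the last bit of `P` equals the first bit of `σ`, and the first
bit of `P` equals the last bit of `σ`. -/
theorem stmt_0 (k : ℕ) (hk : 1 < k) (P σ : List Bool)
    (hP : P.length = k) (hσ : σ.length = k)
    (hbal : P.count false = σ.count false)
    (hmin : ∀ j : ℕ, 1 ≤ j → j < k →
      (P.take j).count false ≠ (σ.take j).count false) :
    P[0]! ≠ P[k-1]! ∧ P[k-1]! = σ[0]! ∧ P[0]! = σ[k-1]! := by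
  set f : ℕ → ℤ := fun j => ((P.take j).count false : ℤ) - ((σ.take j).count false : ℤ)
    with hf
  clear_value f
  have hfne : ∀ j, 1 ≤ j → j < k → f j ≠ 0 := by
    intro j h1 h2 h0
    apply hmin j h1 h2
    have : ((P.take j).count false : ℤ) = ((σ.take j).count false : ℤ) := by
      simpa [hf, sub_eq_zero] using h0
    exact_mod_cast this
  have hstep : ∀ j, j < k →
      f (j+1) = f j + (if P[j]! = false then 1 else 0)
        - (if σ[j]! = false then 1 else 0) := by
    intro j hj
    simp only [hf]
    rw [cnt_step P j (by omega), cnt_step σ j (by omega)]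
    ring
  have hf0 : f 0 = 0 := by simp [hf]
  have hfk : f k = 0 := by
    simp only [hf]
    rw [List.take_of_length_le (by omega), List.take_of_length_le (by omega)]
    rw [hbal, sub_self]
  have hf1 : f 1 = (if P[0]! = false then 1 else 0)
      - (if σ[0]! = false then 1 else 0) := by
    have := hstep 0 (by omega)
    rw [hf0] at this; linarith [this]
  -- sign constancy
  have posc : 1 ≤ f 1 → ∀ j, 1 ≤ j → j < k → 1 ≤ f j := by
    intro h1 j
    induction j with
    | zero => omega
    | succ n ih =>
      intro _ hjk
      rcases Nat.eq_zero_or_pos n with h | h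
      · subst h; exact h1
      · have hn := ih h (by omega)
        have hs := hstep n (by omega)
        have hne := hfne (n+1) (by omega) hjk
        split_ifs at hs <;> omega
  have negc : f 1 ≤ -1 → ∀ j, 1 ≤ j → j < k → f j ≤ -1 := by
    intro h1 j
    induction j with
    | zero => omega
    | succ n ih =>
      intro _ hjk
      rcases Nat.eq_zero_or_pos n with h | h
      · subst h; exact h1
      · have hn := ih h (by omega)
        have hs := hstep n (by omega)
        have hne := hfne (n+1) (by omega) hjk
        split_ifs at hs <;> omega
  have hlast : f k = f (k-1) + (if P[k-1]! = false then 1 else 0)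
      - (if σ[k-1]! = false then 1 else 0) := by
    have := hstep (k-1) (by omega)
    rwa [Nat.sub_add_cancel (by omega)] at this
  have hne1 := hfne 1 le_rfl hk
  have hfkm := hfne (k-1) (by omega) (by omega)
  by_cases hp0 : P[0]! = false
  · have hs0 : σ[0]! = true := by
      by_contra h
      simp only [Bool.not_eq_true] at h
      rw [hf1, hp0, h] at hne1; simp at hne1
    have h1 : f 1 = 1 := by rw [hf1, hp0, hs0]; simp
    have hpos := posc (by omega) (k-1) (by omega) (by omega)
    have hlb : σ[k-1]! = false ∧ P[k-1]! = true := by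
      cases hb3 : P[k-1]! <;> cases hb4 : σ[k-1]! <;>
        rw [hb3, hb4] at hlast <;> simp at hlast
      · exact absurd (by linarith : f (k-1) = 0) hfkm
      · exact absurd hpos (by linarith)
      · exact ⟨rfl, rfl⟩
      · exact absurd (by linarith : f (k-1) = 0) hfkm
    refine ⟨?_, ?_, ?_⟩ <;> simp [hp0, hs0, hlb.1, hlb.2]
  · have hp0' : P[0]! = true := by simpa using hp0
    have hs0 : σ[0]! = false := by
      by_contra h
      simp only [Bool.not_eq_false] at h
      rw [hf1, hp0', h] at hne1; simp at hne1
    have h1 : f 1 = -1 := by rw [hf1, hp0', hs0]; simp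
    have hneg := negc (by omega) (k-1) (by omega) (by omega)
    have hlb : σ[k-1]! = true ∧ P[k-1]! = false := by
      cases hb3 : P[k-1]! <;> cases hb4 : σ[k-1]! <;>
        rw [hb3, hb4] at hlast <;> simp at hlast
      · exact absurd (by linarith : f (k-1) = 0) hfkm
      · exact ⟨rfl, rfl⟩
      · exact absurd hneg (by linarith)
      · exact absurd (by linarith : f (k-1) = 0) hfkm
    refine ⟨?_, ?_, ?_⟩ <;> simp [hp0', hs0, hlb.1, hlb.2]
end

section
/- Let P and σ be a minimally balanced pair of binary strings of length k > 2. Then the strings obtained from P and from σ by deleting their first and last bits (i.e., the substrings consisting of bits 2 through k−1) are balanced: the number of 0's among bits 2,...,k−1 of P equals the number of 0's among bits 2,...,k−1 of σ. -/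
/-!
Let `d j` be the number of `0`s among the first `j` bits of `P` minus that among the first `j`
bits of `σ`. It changes by at most one per bit, vanishes at `j = 0` and `j = k`, and by
minimality nowhere in between, so it keeps one sign on `1, …, k - 1`. Being adjacent to the
zeros at `0` and `k`, both `d 1` and `d (k - 1)` are `±1`, hence equal, and the difference of
the zero counts of the middle bits is `d (k - 1) - d 1 = 0`.
-/

lemma Int.eq_sign_of_abs_le_one {a : ℤ} (h : |a| ≤ 1) : a = a.sign := by
  obtain ⟨h₁, h₂⟩ := abs_le.mp h
  interval_cases a <;> rfl

lemma Int.sign_eq_sign_of_abs_sub_le_one {a b : ℤ} (ha : a ≠ 0) (hb : b ≠ 0)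
    (h : |a - b| ≤ 1) : a.sign = b.sign := by
  obtain ⟨h₁, h₂⟩ := abs_le.mp h
  rcases lt_or_gt_of_ne ha with ha | ha
  · rw [Int.sign_eq_neg_one_of_neg ha, Int.sign_eq_neg_one_of_neg (by omega)]
  · rw [Int.sign_eq_one_of_pos ha, Int.sign_eq_one_of_pos (by omega)]

section StepSequence

variable {f : ℕ → ℤ} (hstep : ∀ j, |f (j + 1) - f j| ≤ 1)
include hstep

lemma sign_eq_sign_of_forall_ne_zero {m n : ℕ} (hmn : m ≤ n)
    (hne : ∀ j, m ≤ j → j ≤ n → f j ≠ 0) : (f n).sign = (f m).sign := by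
  induction n, hmn using Nat.le_induction with
  | base => rfl
  | succ n hmn ih =>
    rw [← ih fun j hj hjn => hne j hj (by omega)]
    exact Int.sign_eq_sign_of_abs_sub_le_one (hne (n + 1) (by omega) le_rfl)
      (hne n hmn (by omega)) (hstep n)

lemma eq_of_forall_ne_zero_of_eq_zero {n : ℕ} (h₀ : f 0 = 0) (hn : f (n + 2) = 0)
    (hne : ∀ j, 1 ≤ j → j ≤ n + 1 → f j ≠ 0) : f (n + 1) = f 1 :=
  calc f (n + 1) = (f (n + 1)).sign :=
        Int.eq_sign_of_abs_le_one (by simpa [hn, abs_sub_comm] using hstep (n + 1))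
    _ = (f 1).sign := sign_eq_sign_of_forall_ne_zero hstep (by omega) hne
    _ = f 1 := (Int.eq_sign_of_abs_le_one (by simpa [h₀] using hstep 0)).symm

end StepSequence

section PrefixCount

variable {α : Type*} [BEq α] (a : α) (l l₁ l₂ : List α)

lemma List.count_take_add (i j : ℕ) :
    (l.take (i + j)).count a = (l.take i).count a + ((l.drop i).take j).count a := by
  rw [List.take_add, List.count_append]

lemma List.count_take_one_le : (l.take 1).count a ≤ 1 :=
  List.count_le_length.trans (by simp)

def prefixCountDiff (j : ℕ) : ℤ := (l₁.take j).count a - (l₂.take j).count a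

lemma abs_prefixCountDiff_succ_sub_le (j : ℕ) :
    |prefixCountDiff a l₁ l₂ (j + 1) - prefixCountDiff a l₁ l₂ j| ≤ 1 := by
  have h₁ := List.count_take_one_le a (l₁.drop j)
  have h₂ := List.count_take_one_le a (l₂.drop j)
  rw [abs_le, prefixCountDiff, prefixCountDiff, List.count_take_add, List.count_take_add]
  omega

end PrefixCount

/-- If `P` and `σ` are a minimally balanced pair of binary strings
of length `k > 2`, then the strings obtained by deleting their first and last
bits (bits `2,...,k-1`) are balanced. -/
theorem stmt_3 (k : ℕ) (hk : 2 < k) (P σ : List Bool)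
    (hP : P.length = k) (hσ : σ.length = k)
    (hbal : P.count false = σ.count false)
    (hmin : ∀ j : ℕ, 1 ≤ j → j < k →
      (P.take j).count false ≠ (σ.take j).count false) :
    ((P.drop 1).take (k - 2)).count false = ((σ.drop 1).take (k - 2)).count false := by
  obtain ⟨n, rfl⟩ : ∃ n, k = n + 2 := ⟨k - 2, by omega⟩
  have hends : prefixCountDiff false P σ (n + 1) = prefixCountDiff false P σ 1 :=
    eq_of_forall_ne_zero_of_eq_zero (abs_prefixCountDiff_succ_sub_le false P σ)
      (by simp [prefixCountDiff])
      (by simp [prefixCountDiff, List.take_of_length_le, hP, hσ, hbal])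
      (fun j hj hjn => by simpa [prefixCountDiff, sub_eq_zero] using hmin j hj (by omega))
  rw [prefixCountDiff, prefixCountDiff, add_comm n 1, List.count_take_add,
    List.count_take_add] at hends
  simp only [Nat.add_sub_cancel]
  omega
end

section
/- Let P and σ be binary strings of the same length k ≥ 2 that are balanced. Suppose the first bit of P differs from the first bit of σ, the last bit of P differs from the last bit of σ, and the first bit of P equals the last bit of P. Then there exists an index j with 1 ≤ j < k such that the length-j prefixes of P and σ are balanced (so P and σ are not a minimally balanced pair). -/
lemma count_take_succ (l : List Bool) (j : ℕ) (h : j < l.length) :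
    (l.take (j+1)).count false = (l.take j).count false + (if l[j]! = false then 1 else 0) := by
  rw [List.take_succ, List.count_append, getElem!_pos l j h, List.getElem?_eq_getElem h]
  by_cases hb : l[j] = false <;> simp [hb]

lemma ivt (f : ℕ → ℤ) (hstep : ∀ i, f i - 1 ≤ f (i+1)) :
    ∀ n a, 0 ≤ f a → f (a + n) ≤ 0 → ∃ j, a ≤ j ∧ j ≤ a + n ∧ f j = 0 := by
  intro n
  induction n with
  | zero => intro a ha hb; exact ⟨a, le_refl _, by omega, le_antisymm (by simpa using hb) ha⟩
  | succ n ih =>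
    intro a ha hb
    by_cases h1 : 0 ≤ f (a + 1)
    · obtain ⟨j, hj1, hj2, hj3⟩ := ih (a+1) h1 (by rw [show a+1+n = a+(n+1) by omega]; exact hb)
      exact ⟨j, by omega, by omega, hj3⟩
    · have := hstep a
      exact ⟨a, le_refl _, by omega, by omega⟩

/-- Let `P` and `σ` be balanced binary strings of the same length
`k ≥ 2`. If the first bits of `P` and `σ` differ, the last bits of `P` and `σ`
differ, and the first bit of `P` equals its last bit, then some proper prefix
pair (of length `j` with `1 ≤ j < k`) is balanced, so `P` and `σ` are not a
minimally balanced pair. -/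
theorem stmt_5 (k : ℕ) (hk : 2 ≤ k) (P σ : List Bool)
    (hP : P.length = k) (hσ : σ.length = k)
    (hbal : P.count false = σ.count false)
    (hfirst : P[0]! ≠ σ[0]!)
    (hlast : P[k-1]! ≠ σ[k-1]!)
    (hends : P[0]! = P[k-1]!) :
    ∃ j : ℕ, 1 ≤ j ∧ j < k ∧ (P.take j).count false = (σ.take j).count false := by
  set d : ℕ → ℤ := fun j => ((P.take j).count false : ℤ) - ((σ.take j).count false : ℤ) with hd
  have hstep : ∀ j, j < k → d (j+1) = d j + ((if P[j]! = false then 1 else 0) - (if σ[j]! = false then 1 else 0)) := by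
    intro j hj
    simp only [hd]
    rw [count_take_succ P j (by omega), count_take_succ σ j (by omega)]
    push_cast
    ring
  have hstep_out : ∀ j, k ≤ j → d j = 0 := by
    intro j hj
    simp only [hd]
    rw [List.take_of_length_le (by omega), List.take_of_length_le (by omega), hbal]
    ring
  have hsl : ∀ i, d i - 1 ≤ d (i+1) := by
    intro i
    by_cases hi : i < k
    · have := hstep i hi
      split_ifs at this <;> omega
    · rw [hstep_out i (by omega), hstep_out (i+1) (by omega)]; omega
  have hsu : ∀ i, d (i+1) ≤ d i + 1 := by
    intro i
    by_cases hi : i < k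
    · have := hstep i hi
      split_ifs at this <;> omega
    · rw [hstep_out i (by omega), hstep_out (i+1) (by omega)]; omega
  have hd0 : d 0 = 0 := by simp [hd]
  have hd1 : d 1 = (if P[0]! = false then 1 else 0) - (if σ[0]! = false then 1 else 0) := by
    simpa [hd0] using hstep 0 (by omega)
  have hdk : d k = 0 := hstep_out k le_rfl
  have hdk1 : d (k-1) = -((if P[k-1]! = false then 1 else 0) - (if σ[k-1]! = false then 1 else 0)) := by
    have := hstep (k-1) (by omega)
    rw [show k-1+1 = k by omega, hdk] at this
    omega
  have hσ0 : σ[0]! = !P[0]! := by revert hfirst; cases P[0]! <;> cases σ[0]! <;> simp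
  have hσk : σ[k-1]! = !P[k-1]! := by revert hlast; cases P[k-1]! <;> cases σ[k-1]! <;> simp
  -- case on P[0]!
  cases hP0 : P[0]! with
  | false =>
    have h1 : d 1 = 1 := by rw [hd1, hσ0, hP0]; simp
    have h2 : d (k-1) = -1 := by rw [hdk1, hσk, ← hends, hP0]; simp
    obtain ⟨j, hj1, hj2, hj3⟩ := ivt d hsl (k-2) 1 (by omega) (by rw [show 1+(k-2) = k-1 by omega]; omega)
    refine ⟨j, hj1, by omega, ?_⟩
    simp only [hd] at hj3
    omega
  | true =>
    have h1 : (-d) 1 = 1 := by simp only [Pi.neg_apply]; rw [hd1, hσ0, hP0]; simp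
    have h2 : (-d) (k-1) = -1 := by simp only [Pi.neg_apply]; rw [hdk1, hσk, ← hends, hP0]; simp
    obtain ⟨j, hj1, hj2, hj3⟩ := ivt (-d) (fun i => by have := hsu i; simp only [Pi.neg_apply]; omega)
      (k-2) 1 (by omega) (by rw [show 1+(k-2) = k-1 by omega]; omega)
    refine ⟨j, hj1, by omega, ?_⟩
    simp only [Pi.neg_apply, hd] at hj3
    omega
end
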